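/- There exists an absolute constant C > 0 with the following property: for every h > 0, every b = (b₁, b₂) ∈ ℝ² with b₁ > 0, and every function v : ℝ² → ℝ² continuously differentiable on an open neighborhood of the closure of the square Q_h(b) = (b₁, b₁+h) × (b₂, b₂+h) and satisfying ∫_{Q_h(b)} x₁ v dA = 0 (componentwise), the boundary stabilization satisfies the upper bound h⁻¹ ∫_{∂Q_h(b)} 2π x₁ |v|² dH¹ ≤ C ρ² ∫_{Q_h(b)} x₁ |∇v|² dA, where ρ = (b₁+h)/b₁, ∂Q_h(b) carries the one-dimensional Hausdorff measure H¹, |∇v|² is the sum of the squared Euclidean norms of the gradients of the two components, and dA is the two-dimensional Lebesgue measure. -/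

import Mathlib

open MeasureTheory Real

/-- The open square `(b₁, b₁+h) × (b₂, b₂+h)`. -/
def sqEl (b : ℝ × ℝ) (h : ℝ) : Set (ℝ × ℝ) :=
  Set.Ioo b.1 (b.1 + h) ×ˢ Set.Ioo b.2 (b.2 + h)

/-- Squared Euclidean norm of the gradient of a scalar field on `ℝ²`. -/
noncomputable def gradSq (v : ℝ × ℝ → ℝ) (x : ℝ × ℝ) : ℝ :=
  (fderiv ℝ v x (1, 0)) ^ 2 + (fderiv ℝ v x (0, 1)) ^ 2

/-!
It suffices to treat each component `u` of `v` and each edge of the square separately. Put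
`ρ = (b₁ + h) / b₁`; on the closed square `b₁ ≤ x₁ ≤ ρ b₁`, so weighted and unweighted integrals
agree up to the factor `ρ`, which is lost once in the trace step and once in the Poincaré step.

Trace: the one-dimensional inequality `g(e)² ≤ 2/h ∫ g² + 2h ∫ g'²` (compare `g(e)` with `g` at a
point where `g²` is at most its mean), integrated along the lines crossing an edge, bounds the edge
integral of `u²` by `2/h ∫ u² + 2h ∫ |∇u|²`.

Poincaré: since `u` has weighted mean zero, `∫ x₁ u² ≤ ∫ x₁ (u - m)²` for every constant `m`. Take
`m = u(x₀, b₂)`, where the vertical line through `x₀` carries at most the average energy; joining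
every point to `(x₀, b₂)` by a horizontal and then a vertical segment gives
`∫ (u - m)² ≤ 2h² ∫ |∇u|²`. Altogether each edge contributes at most `6 ρ² h ∫ x₁ |∇u|²`.
-/

open Set
open scoped Interval

theorem sq_setIntegral_le_measureReal_mul {X : Type*} [MeasurableSpace X] {μ : Measure X}
    {s : Set X} {f : X → ℝ} (hs : μ s ≠ ⊤) (hf : IntegrableOn f s μ)
    (hf2 : IntegrableOn (fun x => f x ^ 2) s μ) :
    (∫ x in s, f x ∂μ) ^ 2 ≤ μ.real s * ∫ x in s, f x ^ 2 ∂μ := by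
  rcases eq_or_ne (μ s) 0 with h0 | h0
  · simp [Measure.restrict_eq_zero.2 h0]
  have hpos : 0 < μ.real s := ENNReal.toReal_pos h0 hs
  have jensen := (even_two.convexOn_pow (𝕜 := ℝ)).map_set_average_le
    (continuous_pow 2).continuousOn isClosed_univ h0 hs (by simp) hf hf2
  simp only [setAverage_eq, smul_eq_mul] at jensen
  calc (∫ x in s, f x ∂μ) ^ 2 = μ.real s ^ 2 * ((μ.real s)⁻¹ * ∫ x in s, f x ∂μ) ^ 2 := by
        field_simp
    _ ≤ μ.real s ^ 2 * ((μ.real s)⁻¹ * ∫ x in s, f x ^ 2 ∂μ) := by gcongr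
    _ = μ.real s * ∫ x in s, f x ^ 2 ∂μ := by field_simp

theorem integral_mul_sq_le_integral_mul_sq_sub {X : Type*} [MeasurableSpace X] {μ : Measure X}
    {r u : X → ℝ} (hr : 0 ≤ᵐ[μ] r) (hr_int : Integrable r μ)
    (hru : Integrable (fun x => r x * u x) μ) (hru2 : Integrable (fun x => r x * u x ^ 2) μ)
    (hmean : ∫ x, r x * u x ∂μ = 0) (m : ℝ) :
    ∫ x, r x * u x ^ 2 ∂μ ≤ ∫ x, r x * (u x - m) ^ 2 ∂μ := by
  have hexpand : ∫ x, r x * (u x - m) ^ 2 ∂μ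
      = ∫ x, r x * u x ^ 2 ∂μ - 2 * m * ∫ x, r x * u x ∂μ + m ^ 2 * ∫ x, r x ∂μ := by
    rw [show (fun x => r x * (u x - m) ^ 2)
          = fun x => r x * u x ^ 2 - 2 * m * (r x * u x) + m ^ 2 * r x by ext; ring,
      integral_add, integral_sub hru2 (hru.const_mul _), integral_const_mul, integral_const_mul]
    exacts [hru2.sub (hru.const_mul _), hr_int.const_mul _]
  rw [hexpand, hmean]
  nlinarith [integral_nonneg_of_ae hr, sq_nonneg m]

section Interval

variable {α β : ℝ} {g g' : ℝ → ℝ}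

theorem sq_sub_le_mul_setIntegral_deriv_sq (hd : ∀ x ∈ Icc α β, HasDerivAt g (g' x) x)
    (hc : ContinuousOn g' (Icc α β)) {s t : ℝ} (hs : s ∈ Icc α β) (ht : t ∈ Icc α β) :
    (g t - g s) ^ 2 ≤ (β - α) * ∫ x in Icc α β, g' x ^ 2 := by
  have hsub : Ι s t ⊆ Icc α β := uIoc_subset_uIcc.trans (uIcc_subset_Icc hs ht)
  have hftc : ∫ x in s..t, g' x = g t - g s :=
    intervalIntegral.integral_eq_sub_of_hasDerivAt (fun x hx => hd x (uIcc_subset_Icc hs ht hx))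
      (hc.mono (uIcc_subset_Icc hs ht)).intervalIntegrable
  have hint2 : IntegrableOn (fun x => g' x ^ 2) (Icc α β) :=
    (hc.pow 2).integrableOn_compact isCompact_Icc
  calc (g t - g s) ^ 2 = (∫ x in Ι s t, g' x) ^ 2 := by
        rw [← hftc, ← sq_abs, intervalIntegral.abs_integral_eq_abs_integral_uIoc, sq_abs]
    _ ≤ volume.real (Ι s t) * ∫ x in Ι s t, g' x ^ 2 :=
        sq_setIntegral_le_measureReal_mul (by simp)
          ((hc.integrableOn_compact isCompact_Icc).mono_set hsub) (hint2.mono_set hsub)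
    _ ≤ (β - α) * ∫ x in Icc α β, g' x ^ 2 := by
        refine mul_le_mul ?_ (setIntegral_mono_set hint2 ?_ hsub.eventuallyLE)
          (setIntegral_nonneg measurableSet_uIoc fun x _ => sq_nonneg _) (by linarith [hs.1, hs.2])
        · simpa [Real.volume_real_Icc_of_le (hs.1.trans hs.2)] using
            measureReal_mono (μ := volume) hsub isCompact_Icc.measure_ne_top
        · exact ae_restrict_of_forall_mem measurableSet_Icc fun x _ => sq_nonneg _

theorem sq_le_setIntegral_sq_add_setIntegral_deriv_sq (hαβ : α < β)
    (hd : ∀ x ∈ Icc α β, HasDerivAt g (g' x) x) (hc : ContinuousOn g' (Icc α β)) {e : ℝ}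
    (he : e ∈ Icc α β) :
    g e ^ 2 ≤ 2 / (β - α) * (∫ x in Icc α β, g x ^ 2) + 2 * (β - α) * ∫ x in Icc α β, g' x ^ 2 := by
  have hg : ContinuousOn g (Icc α β) := fun x hx => (hd x hx).continuousAt.continuousWithinAt
  obtain ⟨s, hs, hs_le⟩ := exists_le_setAverage (μ := volume) (by simp [hαβ])
    isCompact_Icc.measure_ne_top ((hg.pow 2).integrableOn_compact isCompact_Icc)
  rw [setAverage_eq, smul_eq_mul, Real.volume_real_Icc_of_le hαβ.le, ← div_eq_inv_mul] at hs_le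
  calc g e ^ 2 = (g s + (g e - g s)) ^ 2 := by ring
    _ ≤ 2 * (g s ^ 2 + (g e - g s) ^ 2) := add_sq_le
    _ ≤ 2 * ((∫ x in Icc α β, g x ^ 2) / (β - α) + (β - α) * ∫ x in Icc α β, g' x ^ 2) := by
        gcongr
        · exact hs_le
        · exact sq_sub_le_mul_setIntegral_deriv_sq hd hc hs he
    _ = _ := by ring

end Interval

namespace MeasureTheory

variable {α β E : Type*} [MeasurableSpace α] [MeasurableSpace β] [NormedAddCommGroup E]
  {μ : Measure α} {ν : Measure β} [SFinite μ] [SFinite ν] {s : Set α} {t : Set β}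

theorem IntegrableOn.comp_snd {g : β → E} (hs : μ s ≠ ⊤) (hg : IntegrableOn g t ν) :
    IntegrableOn (fun z => g z.2) (s ×ˢ t) (μ.prod ν) := by
  have := isFiniteMeasure_restrict.2 hs
  rw [IntegrableOn, ← Measure.prod_restrict]
  exact Integrable.comp_snd hg _

variable [NormedSpace ℝ E] {f : α × β → E}

theorem IntegrableOn.setIntegral_prod_left (hf : IntegrableOn f (s ×ˢ t) (μ.prod ν)) :
    IntegrableOn (fun x => ∫ y in t, f (x, y) ∂ν) s μ := by
  rw [IntegrableOn, ← Measure.prod_restrict] at hf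
  exact hf.integral_prod_left

theorem IntegrableOn.setIntegral_prod_right (hf : IntegrableOn f (s ×ˢ t) (μ.prod ν)) :
    IntegrableOn (fun y => ∫ x in s, f (x, y) ∂μ) t ν := by
  rw [IntegrableOn, ← Measure.prod_restrict] at hf
  exact hf.integral_prod_right

theorem setIntegral_prod_symm (hf : IntegrableOn f (s ×ˢ t) (μ.prod ν)) :
    ∫ z in s ×ˢ t, f z ∂μ.prod ν = ∫ y in t, ∫ x in s, f (x, y) ∂μ ∂ν := by
  rw [IntegrableOn, ← Measure.prod_restrict] at hf
  rw [← Measure.prod_restrict, integral_prod_symm _ hf]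

theorem setIntegral_comp_snd (g : β → E) :
    ∫ z in s ×ˢ t, g z.2 ∂μ.prod ν = μ.real s • ∫ y in t, g y ∂ν := by
  rw [← Measure.prod_restrict, integral_fun_snd, measureReal_restrict_apply_univ]

end MeasureTheory

section Rectangle

variable {u p q : ℝ × ℝ → ℝ}

theorem setIntegral_sq_le_of_hasDerivAt_snd {s : Set ℝ} {α β : ℝ} (hs : IsCompact s)
    (hαβ : α < β) (hu : ContinuousOn u (s ×ˢ Icc α β)) (hq : ContinuousOn q (s ×ˢ Icc α β))
    (hqd : ∀ z ∈ s ×ˢ Icc α β, HasDerivAt (fun y => u (z.1, y)) (q z) z.2) {e : ℝ}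
    (he : e ∈ Icc α β) :
    ∫ x in s, u (x, e) ^ 2 ≤ 2 / (β - α) * (∫ z in s ×ˢ Icc α β, u z ^ 2)
      + 2 * (β - α) * ∫ z in s ×ˢ Icc α β, q z ^ 2 := by
  have hK : IsCompact (s ×ˢ Icc α β) := hs.prod isCompact_Icc
  have hu2 : IntegrableOn (fun z => u z ^ 2) (s ×ˢ Icc α β) := (hu.pow 2).integrableOn_compact hK
  have hq2 : IntegrableOn (fun z => q z ^ 2) (s ×ˢ Icc α β) := (hq.pow 2).integrableOn_compact hK
  have hue : ContinuousOn (fun x => u (x, e)) s :=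
    hu.comp (Continuous.prodMk_left e).continuousOn fun x hx => ⟨hx, he⟩
  have hU := hu2.setIntegral_prod_left.const_mul (2 / (β - α))
  have hQ := hq2.setIntegral_prod_left.const_mul (2 * (β - α))
  rw [Measure.volume_eq_prod, setIntegral_prod _ hu2, setIntegral_prod _ hq2,
    ← integral_const_mul, ← integral_const_mul, ← integral_add hU hQ]
  refine setIntegral_mono_on ((hue.pow 2).integrableOn_compact hs) (hU.add hQ)
    hs.measurableSet fun x hx => ?_
  exact sq_le_setIntegral_sq_add_setIntegral_deriv_sq (g := fun y => u (x, y))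
    (g' := fun y => q (x, y)) hαβ (fun y hy => hqd (x, y) ⟨hx, hy⟩)
    (hq.comp (Continuous.prodMk_right x).continuousOn fun y hy => ⟨hx, hy⟩) he

theorem setIntegral_sq_le_of_hasDerivAt_fst {t : Set ℝ} {α β : ℝ} (ht : IsCompact t)
    (hαβ : α < β) (hu : ContinuousOn u (Icc α β ×ˢ t)) (hp : ContinuousOn p (Icc α β ×ˢ t))
    (hpd : ∀ z ∈ Icc α β ×ˢ t, HasDerivAt (fun x => u (x, z.2)) (p z) z.1) {e : ℝ}
    (he : e ∈ Icc α β) :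
    ∫ y in t, u (e, y) ^ 2 ≤ 2 / (β - α) * (∫ z in Icc α β ×ˢ t, u z ^ 2)
      + 2 * (β - α) * ∫ z in Icc α β ×ˢ t, p z ^ 2 := by
  have hswap := mapsTo_swap_prod t (Icc α β)
  have key := setIntegral_sq_le_of_hasDerivAt_snd (u := u ∘ Prod.swap) (q := p ∘ Prod.swap) ht
    hαβ (hu.comp continuous_swap.continuousOn hswap) (hp.comp continuous_swap.continuousOn hswap)
    (fun z hz => hpd z.swap (hswap hz)) he
  simp only [Function.comp_apply, Prod.swap_prod_mk] at key
  rw [Measure.volume_eq_prod] at key ⊢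
  rwa [setIntegral_prod_swap (Icc α β) t (fun z => u z ^ 2),
    setIntegral_prod_swap (Icc α β) t (fun z => p z ^ 2)] at key

theorem exists_setIntegral_sq_sub_le {α₁ β₁ α₂ β₂ : ℝ} (h₁ : α₁ < β₁) (h₂ : α₂ < β₂)
    (hu : ContinuousOn u (Icc α₁ β₁ ×ˢ Icc α₂ β₂)) (hp : ContinuousOn p (Icc α₁ β₁ ×ˢ Icc α₂ β₂))
    (hq : ContinuousOn q (Icc α₁ β₁ ×ˢ Icc α₂ β₂))
    (hpd : ∀ z ∈ Icc α₁ β₁ ×ˢ Icc α₂ β₂, HasDerivAt (fun x => u (x, z.2)) (p z) z.1)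
    (hqd : ∀ z ∈ Icc α₁ β₁ ×ˢ Icc α₂ β₂, HasDerivAt (fun y => u (z.1, y)) (q z) z.2) :
    ∃ m : ℝ, ∫ z in Icc α₁ β₁ ×ˢ Icc α₂ β₂, (u z - m) ^ 2
      ≤ 2 * (β₁ - α₁) ^ 2 * (∫ z in Icc α₁ β₁ ×ˢ Icc α₂ β₂, p z ^ 2)
        + 2 * (β₂ - α₂) ^ 2 * ∫ z in Icc α₁ β₁ ×ˢ Icc α₂ β₂, q z ^ 2 := by
  set I₁ := Icc α₁ β₁
  set I₂ := Icc α₂ β₂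
  have hK : IsCompact (I₁ ×ˢ I₂) := isCompact_Icc.prod isCompact_Icc
  have hp2 : IntegrableOn (fun z => p z ^ 2) (I₁ ×ˢ I₂) := (hp.pow 2).integrableOn_compact hK
  have hq2 : IntegrableOn (fun z => q z ^ 2) (I₁ ×ˢ I₂) := (hq.pow 2).integrableOn_compact hK
  set A : ℝ → ℝ := fun y => ∫ x in I₁, p (x, y) ^ 2
  set B : ℝ → ℝ := fun x => ∫ y in I₂, q (x, y) ^ 2
  have hA : IntegrableOn A I₂ := hp2.setIntegral_prod_right
  have hB : IntegrableOn B I₁ := hq2.setIntegral_prod_left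
  obtain ⟨x₀, hx₀, hB_le⟩ := exists_le_setAverage (by simp [h₁]) isCompact_Icc.measure_ne_top hB
  rw [setAverage_eq, smul_eq_mul, Real.volume_real_Icc_of_le h₁.le] at hB_le
  refine ⟨u (x₀, α₂), ?_⟩
  set G : ℝ → ℝ := fun y => 2 * (β₁ - α₁) * A y + 2 * (β₂ - α₂) * B x₀
  have hpath : ∀ z ∈ I₁ ×ˢ I₂, (u z - u (x₀, α₂)) ^ 2 ≤ G z.2 := by
    rintro ⟨x, y⟩ ⟨hx, hy⟩
    have horizontal := sq_sub_le_mul_setIntegral_deriv_sq (g := fun x => u (x, y))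
      (fun x' hx' => hpd (x', y) ⟨hx', hy⟩)
      (hp.comp (Continuous.prodMk_left y).continuousOn fun x' hx' => ⟨hx', hy⟩) hx₀ hx
    have vertical := sq_sub_le_mul_setIntegral_deriv_sq (g := fun y => u (x₀, y))
      (fun y' hy' => hqd (x₀, y') ⟨hx₀, hy'⟩)
      (hq.comp (Continuous.prodMk_right x₀).continuousOn fun y' hy' => ⟨hx₀, hy'⟩)
      (left_mem_Icc.2 h₂.le) hy
    calc (u (x, y) - u (x₀, α₂)) ^ 2
        = ((u (x, y) - u (x₀, y)) + (u (x₀, y) - u (x₀, α₂))) ^ 2 := by ring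
      _ ≤ 2 * ((u (x, y) - u (x₀, y)) ^ 2 + (u (x₀, y) - u (x₀, α₂)) ^ 2) := add_sq_le
      _ ≤ G y := by simp only [G]; linarith
  have hG : IntegrableOn (fun z : ℝ × ℝ => G z.2) (I₁ ×ˢ I₂) :=
    IntegrableOn.comp_snd isCompact_Icc.measure_ne_top
      ((hA.const_mul _).add (integrableOn_const isCompact_Icc.measure_ne_top))
  calc ∫ z in I₁ ×ˢ I₂, (u z - u (x₀, α₂)) ^ 2
      ≤ ∫ z in I₁ ×ˢ I₂, G z.2 :=
        setIntegral_mono_on (((hu.sub continuousOn_const).pow 2).integrableOn_compact hK) hG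
          (measurableSet_Icc.prod measurableSet_Icc) hpath
    _ = (β₁ - α₁) * ∫ y in I₂, G y := by
        rw [Measure.volume_eq_prod, setIntegral_comp_snd, Real.volume_real_Icc_of_le h₁.le,
          smul_eq_mul]
    _ = 2 * (β₁ - α₁) ^ 2 * (∫ y in I₂, A y) + 2 * (β₂ - α₂) ^ 2 * ((β₁ - α₁) * B x₀) := by
        rw [integral_add (hA.const_mul _) (integrableOn_const isCompact_Icc.measure_ne_top),
          integral_const_mul, setIntegral_const, Real.volume_real_Icc_of_le h₂.le, smul_eq_mul]
        ring
    _ ≤ _ := by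
        rw [Measure.volume_eq_prod, setIntegral_prod_symm hp2, setIntegral_prod _ hq2]
        gcongr
        rwa [← le_inv_mul_iff₀ (by linarith)]

end Rectangle

section ContDiff

variable {F : Type*} [NormedAddCommGroup F] [NormedSpace ℝ F] {u : ℝ × ℝ → F}
  {U : Set (ℝ × ℝ)} {z : ℝ × ℝ}

theorem ContDiffOn.hasDerivAt_comp_prodMk_left (hu : ContDiffOn ℝ 1 u U) (hU : IsOpen U)
    (hz : z ∈ U) : HasDerivAt (fun x => u (x, z.2)) (fderiv ℝ u z (1, 0)) z.1 :=
  ((hu.differentiableOn one_ne_zero).hasFDerivAt (hU.mem_nhds hz)).comp_hasDerivAt z.1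
    ((hasDerivAt_id z.1).prodMk (hasDerivAt_const z.1 z.2))

theorem ContDiffOn.hasDerivAt_comp_prodMk_right (hu : ContDiffOn ℝ 1 u U) (hU : IsOpen U)
    (hz : z ∈ U) : HasDerivAt (fun y => u (z.1, y)) (fderiv ℝ u z (0, 1)) z.2 :=
  ((hu.differentiableOn one_ne_zero).hasFDerivAt (hU.mem_nhds hz)).comp_hasDerivAt z.2
    ((hasDerivAt_const z.2 z.1).prodMk (hasDerivAt_id z.2))

theorem ContDiffOn.continuousOn_fderiv_apply (hu : ContDiffOn ℝ 1 u U) (hU : IsOpen U)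
    (w : ℝ × ℝ) : ContinuousOn (fun z => fderiv ℝ u z w) U :=
  (hu.continuousOn_fderiv_of_isOpen hU le_rfl).clm_apply continuousOn_const

end ContDiff

theorem ContDiffOn.continuousOn_gradSq {u : ℝ × ℝ → ℝ} {U : Set (ℝ × ℝ)}
    (hu : ContDiffOn ℝ 1 u U) (hU : IsOpen U) : ContinuousOn (gradSq u) U :=
  ((hu.continuousOn_fderiv_apply hU _).pow 2).add ((hu.continuousOn_fderiv_apply hU _).pow 2)

section Square

variable {b : ℝ × ℝ} {h : ℝ}

theorem closure_sqEl (hh : 0 < h) :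
    closure (sqEl b h) = Icc b.1 (b.1 + h) ×ˢ Icc b.2 (b.2 + h) := by
  rw [sqEl, closure_prod_eq, closure_Ioo (by linarith), closure_Ioo (by linarith)]

theorem isCompact_closure_sqEl (hh : 0 < h) : IsCompact (closure (sqEl b h)) := by
  rw [closure_sqEl hh]
  exact isCompact_Icc.prod isCompact_Icc

theorem frontier_sqEl (hh : 0 < h) :
    frontier (sqEl b h) = (Icc b.1 (b.1 + h) ×ˢ {b.2} ∪ Icc b.1 (b.1 + h) ×ˢ {b.2 + h})
      ∪ ({b.1} ×ˢ Icc b.2 (b.2 + h) ∪ {b.1 + h} ×ˢ Icc b.2 (b.2 + h)) := by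
  have h₁ : b.1 < b.1 + h := by linarith
  have h₂ : b.2 < b.2 + h := by linarith
  rw [sqEl, frontier_prod_eq, closure_Ioo h₁.ne, closure_Ioo h₂.ne, frontier_Ioo h₁,
    frontier_Ioo h₂, insert_eq, insert_eq, prod_union, union_prod]

theorem volume_restrict_closure_sqEl :
    volume.restrict (closure (sqEl b h)) = volume.restrict (sqEl b h) :=
  Measure.restrict_congr_set <| closure_ae_eq_of_null_frontier <|
    ((convex_Ioo _ _).prod (convex_Ioo _ _)).addHaar_frontier volume

variable {u : ℝ × ℝ → ℝ} {U : Set (ℝ × ℝ)}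

theorem mul_setIntegral_gradSq_le (hh : 0 < h) (hU : IsOpen U) (hKU : closure (sqEl b h) ⊆ U)
    (hu : ContDiffOn ℝ 1 u U) :
    b.1 * ∫ z in closure (sqEl b h), gradSq u z
      ≤ ∫ z in closure (sqEl b h), z.1 * gradSq u z := by
  have hK := isCompact_closure_sqEl (b := b) hh
  have hG := (hu.continuousOn_gradSq hU).mono hKU
  rw [← integral_const_mul]
  refine setIntegral_mono_on ((hG.integrableOn_compact hK).const_mul _)
    ((continuous_fst.continuousOn.mul hG).integrableOn_compact hK) hK.measurableSet
    fun z hz => mul_le_mul_of_nonneg_right ?_ (by unfold gradSq; positivity)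
  rw [closure_sqEl hh] at hz
  exact hz.1.1

theorem mul_setIntegral_sq_le (hb : 0 < b.1) (hh : 0 < h) (hU : IsOpen U)
    (hKU : closure (sqEl b h) ⊆ U) (hu : ContDiffOn ℝ 1 u U)
    (hmean : ∫ z in closure (sqEl b h), z.1 * u z = 0) :
    b.1 * ∫ z in closure (sqEl b h), u z ^ 2
      ≤ 2 * ((b.1 + h) / b.1) * h ^ 2 * ∫ z in closure (sqEl b h), z.1 * gradSq u z := by
  have hW := mul_setIntegral_gradSq_le hh hU hKU hu
  rw [closure_sqEl hh] at hKU hmean hW ⊢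
  set K := Icc b.1 (b.1 + h) ×ˢ Icc b.2 (b.2 + h)
  have hKm : MeasurableSet K := measurableSet_Icc.prod measurableSet_Icc
  have hint : ∀ f : ℝ × ℝ → ℝ, ContinuousOn f K → IntegrableOn f K := fun f hf =>
    hf.integrableOn_compact (isCompact_Icc.prod isCompact_Icc)
  have huK := hu.continuousOn.mono hKU
  have hpK := (hu.continuousOn_fderiv_apply hU (1, 0)).mono hKU
  have hqK := (hu.continuousOn_fderiv_apply hU (0, 1)).mono hKU
  obtain ⟨m, hm⟩ := exists_setIntegral_sq_sub_le (by linarith) (by linarith) huK hpK hqK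
    (fun z hz => hu.hasDerivAt_comp_prodMk_left hU (hKU hz))
    (fun z hz => hu.hasDerivAt_comp_prodMk_right hU (hKU hz))
  simp only [add_sub_cancel_left] at hm
  have hgrad : ∫ z in K, gradSq u z
      = (∫ z in K, fderiv ℝ u z (1, 0) ^ 2) + ∫ z in K, fderiv ℝ u z (0, 1) ^ 2 :=
    integral_add (hint _ (by fun_prop)) (hint _ (by fun_prop))
  have hweight : ∀ z ∈ K, b.1 ≤ z.1 ∧ z.1 ≤ b.1 + h := fun z hz => hz.1
  calc b.1 * ∫ z in K, u z ^ 2 = ∫ z in K, b.1 * u z ^ 2 := (integral_const_mul _ _).symm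
    _ ≤ ∫ z in K, z.1 * u z ^ 2 :=
        setIntegral_mono_on (hint _ (by fun_prop)) (hint _ (by fun_prop)) hKm fun z hz =>
          mul_le_mul_of_nonneg_right (hweight z hz).1 (sq_nonneg _)
    _ ≤ ∫ z in K, z.1 * (u z - m) ^ 2 :=
        integral_mul_sq_le_integral_mul_sq_sub
          (ae_restrict_of_forall_mem hKm fun z hz => hb.le.trans (hweight z hz).1)
          (hint _ (by fun_prop)) (hint _ (by fun_prop)) (hint _ (by fun_prop)) hmean m
    _ ≤ ∫ z in K, (b.1 + h) * (u z - m) ^ 2 :=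
        setIntegral_mono_on (hint _ (by fun_prop)) (hint _ (by fun_prop)) hKm fun z hz =>
          mul_le_mul_of_nonneg_right (hweight z hz).2 (sq_nonneg _)
    _ ≤ (b.1 + h) * (2 * h ^ 2 * ∫ z in K, gradSq u z) := by
        rw [integral_const_mul, hgrad]
        gcongr
        linarith
    _ = 2 * ((b.1 + h) / b.1) * h ^ 2 * (b.1 * ∫ z in K, gradSq u z) := by
        field_simp
    _ ≤ _ := by gcongr

theorem trace_bound_le_weighted_energy (hb : 0 < b.1) (hh : 0 < h) (hU : IsOpen U)
    (hKU : closure (sqEl b h) ⊆ U) (hu : ContDiffOn ℝ 1 u U)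
    (hmean : ∫ z in closure (sqEl b h), z.1 * u z = 0) :
    (b.1 + h) * (2 / h * (∫ z in closure (sqEl b h), u z ^ 2)
        + 2 * h * ∫ z in closure (sqEl b h), gradSq u z)
      ≤ 6 * ((b.1 + h) / b.1) ^ 2 * h * ∫ z in closure (sqEl b h), z.1 * gradSq u z := by
  have hP := mul_setIntegral_sq_le hb hh hU hKU hu hmean
  have hW := mul_setIntegral_gradSq_le hh hU hKU hu
  set ρ := (b.1 + h) / b.1
  set J := ∫ z in closure (sqEl b h), z.1 * gradSq u z
  have hρ : 1 ≤ ρ := (le_div_iff₀ hb).2 (by linarith)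
  have hJ : 0 ≤ J :=
    (mul_nonneg hb.le (integral_nonneg fun z => by unfold gradSq; positivity)).trans hW
  calc _ = ρ * (2 / h * (b.1 * ∫ z in closure (sqEl b h), u z ^ 2)
        + 2 * h * (b.1 * ∫ z in closure (sqEl b h), gradSq u z)) := by
        simp only [ρ]; field_simp
    _ ≤ ρ * (2 / h * (2 * ρ * h ^ 2 * J) + 2 * h * J) := by gcongr
    _ = ρ * ((4 * ρ + 2) * h * J) := by field_simp; ring
    _ ≤ ρ * (6 * ρ * h * J) := by gcongr; linarith
    _ = 6 * ρ ^ 2 * h * J := by ring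

theorem setIntegral_mul_sq_horizontal_le (hb : 0 < b.1) (hh : 0 < h) (hU : IsOpen U)
    (hKU : closure (sqEl b h) ⊆ U) (hu : ContDiffOn ℝ 1 u U)
    (hmean : ∫ z in closure (sqEl b h), z.1 * u z = 0) {e : ℝ} (he : e ∈ Icc b.2 (b.2 + h)) :
    ∫ x in Icc b.1 (b.1 + h), x * u (x, e) ^ 2
      ≤ 6 * ((b.1 + h) / b.1) ^ 2 * h * ∫ z in closure (sqEl b h), z.1 * gradSq u z := by
  refine le_trans ?_ (trace_bound_le_weighted_energy hb hh hU hKU hu hmean)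
  have hK := isCompact_closure_sqEl (b := b) hh
  rw [closure_sqEl hh] at hKU hK ⊢
  have huK := hu.continuousOn.mono hKU
  have hqK := (hu.continuousOn_fderiv_apply hU (0, 1)).mono hKU
  have hue : ContinuousOn (fun x => u (x, e)) (Icc b.1 (b.1 + h)) :=
    huK.comp (Continuous.prodMk_left e).continuousOn fun x hx => ⟨hx, he⟩
  have htrace := setIntegral_sq_le_of_hasDerivAt_snd isCompact_Icc (by linarith) huK hqK
    (fun z hz => hu.hasDerivAt_comp_prodMk_right hU (hKU hz)) he
  have hq_le : ∫ z in Icc b.1 (b.1 + h) ×ˢ Icc b.2 (b.2 + h), fderiv ℝ u z (0, 1) ^ 2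
      ≤ ∫ z in Icc b.1 (b.1 + h) ×ˢ Icc b.2 (b.2 + h), gradSq u z :=
    setIntegral_mono_on ((hqK.pow 2).integrableOn_compact hK)
      (((hu.continuousOn_gradSq hU).mono hKU).integrableOn_compact hK) hK.measurableSet
      fun z _ => le_add_of_nonneg_left (sq_nonneg _)
  rw [add_sub_cancel_left] at htrace
  calc ∫ x in Icc b.1 (b.1 + h), x * u (x, e) ^ 2
      ≤ ∫ x in Icc b.1 (b.1 + h), (b.1 + h) * u (x, e) ^ 2 :=
        setIntegral_mono_on ((continuousOn_id.mul (hue.pow 2)).integrableOn_compact isCompact_Icc)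
          ((continuousOn_const.mul (hue.pow 2)).integrableOn_compact isCompact_Icc)
          measurableSet_Icc fun x hx => mul_le_mul_of_nonneg_right hx.2 (sq_nonneg _)
    _ ≤ _ := by
        rw [integral_const_mul]
        gcongr
        exact htrace.trans (by gcongr)

theorem setIntegral_mul_sq_vertical_le (hb : 0 < b.1) (hh : 0 < h) (hU : IsOpen U)
    (hKU : closure (sqEl b h) ⊆ U) (hu : ContDiffOn ℝ 1 u U)
    (hmean : ∫ z in closure (sqEl b h), z.1 * u z = 0) {e : ℝ} (he : e ∈ Icc b.1 (b.1 + h)) :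
    ∫ y in Icc b.2 (b.2 + h), e * u (e, y) ^ 2
      ≤ 6 * ((b.1 + h) / b.1) ^ 2 * h * ∫ z in closure (sqEl b h), z.1 * gradSq u z := by
  refine le_trans ?_ (trace_bound_le_weighted_energy hb hh hU hKU hu hmean)
  have hK := isCompact_closure_sqEl (b := b) hh
  rw [closure_sqEl hh] at hKU hK ⊢
  have huK := hu.continuousOn.mono hKU
  have hpK := (hu.continuousOn_fderiv_apply hU (1, 0)).mono hKU
  have htrace := setIntegral_sq_le_of_hasDerivAt_fst isCompact_Icc (by linarith) huK hpK
    (fun z hz => hu.hasDerivAt_comp_prodMk_left hU (hKU hz)) he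
  have hp_le : ∫ z in Icc b.1 (b.1 + h) ×ˢ Icc b.2 (b.2 + h), fderiv ℝ u z (1, 0) ^ 2
      ≤ ∫ z in Icc b.1 (b.1 + h) ×ˢ Icc b.2 (b.2 + h), gradSq u z :=
    setIntegral_mono_on ((hpK.pow 2).integrableOn_compact hK)
      (((hu.continuousOn_gradSq hU).mono hKU).integrableOn_compact hK) hK.measurableSet
      fun z _ => le_add_of_nonneg_right (sq_nonneg _)
  rw [add_sub_cancel_left] at htrace
  rw [integral_const_mul]
  gcongr
  · exact he.2
  · exact htrace.trans (by gcongr)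

end Square

section Hausdorff

variable {X : Type*} [MetricSpace X] [MeasurableSpace X] [BorelSpace X] {ι : ℝ → X}

theorem Isometry.measurableEmbedding (hι : Isometry ι) : MeasurableEmbedding ι :=
  hι.isClosedEmbedding.measurableEmbedding

theorem Isometry.restrict_hausdorffMeasure_image (hι : Isometry ι) (s : Set ℝ) :
    (μH[1] : Measure X).restrict (ι '' s) = (volume.restrict s).map ι := by
  rw [← hausdorffMeasure_real, ← preimage_image_eq s hι.injective,
    ← hι.measurableEmbedding.restrict_map, hι.map_hausdorffMeasure (Or.inl zero_le_one),
    Measure.restrict_restrict_of_subset (image_subset_range ι _), preimage_image_eq s hι.injective]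

theorem Isometry.setIntegral_hausdorffMeasure_image (hι : Isometry ι) (s : Set ℝ) (f : X → ℝ) :
    ∫ z in ι '' s, f z ∂μH[1] = ∫ x in s, f (ι x) := by
  rw [hι.restrict_hausdorffMeasure_image, hι.measurableEmbedding.integral_map]

theorem Isometry.integrableOn_hausdorffMeasure_image_iff (hι : Isometry ι) {s : Set ℝ}
    {f : X → ℝ} : IntegrableOn f (ι '' s) μH[1] ↔ IntegrableOn (fun x => f (ι x)) s := by
  rw [IntegrableOn, hι.restrict_hausdorffMeasure_image, hι.measurableEmbedding.integrable_map_iff]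
  rfl

end Hausdorff

theorem isometry_prodMk_left (c : ℝ) : Isometry fun x : ℝ => (x, c) :=
  Isometry.of_dist_eq fun x y => by simp [Prod.dist_eq]

theorem isometry_prodMk_right (c : ℝ) : Isometry fun y : ℝ => (c, y) :=
  Isometry.of_dist_eq fun x y => by simp [Prod.dist_eq]

section Edges

variable {s t : Set ℝ} {c : ℝ} {f : ℝ × ℝ → ℝ}

theorem setIntegral_prod_singleton_hausdorffMeasure :
    ∫ z in s ×ˢ {c}, f z ∂μH[1] = ∫ x in s, f (x, c) := by
  rw [prod_singleton, (isometry_prodMk_left c).setIntegral_hausdorffMeasure_image]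

theorem setIntegral_singleton_prod_hausdorffMeasure :
    ∫ z in {c} ×ˢ t, f z ∂μH[1] = ∫ y in t, f (c, y) := by
  rw [singleton_prod, (isometry_prodMk_right c).setIntegral_hausdorffMeasure_image]

theorem ContinuousOn.integrableOn_prod_singleton_hausdorffMeasure (hs : IsCompact s)
    (hf : ContinuousOn f (s ×ˢ t)) (hc : c ∈ t) : IntegrableOn f (s ×ˢ {c}) μH[1] := by
  rw [prod_singleton, (isometry_prodMk_left c).integrableOn_hausdorffMeasure_image_iff]
  exact (hf.comp (Continuous.prodMk_left c).continuousOn fun x hx => ⟨hx, hc⟩).integrableOn_compact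
    hs

theorem ContinuousOn.integrableOn_singleton_prod_hausdorffMeasure (ht : IsCompact t)
    (hf : ContinuousOn f (s ×ˢ t)) (hc : c ∈ s) : IntegrableOn f ({c} ×ˢ t) μH[1] := by
  rw [singleton_prod, (isometry_prodMk_right c).integrableOn_hausdorffMeasure_image_iff]
  exact (hf.comp (Continuous.prodMk_right c).continuousOn fun y hy => ⟨hc, hy⟩).integrableOn_compact
    ht

end Edges

theorem setIntegral_union_le_add {X : Type*} [MeasurableSpace X] {μ : Measure X} {s t : Set X}
    {f : X → ℝ} (hs : MeasurableSet s) (ht : MeasurableSet t) (hfs : IntegrableOn f s μ)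
    (hft : IntegrableOn f t μ) (hf : ∀ x ∈ t, 0 ≤ f x) :
    ∫ x in s ∪ t, f x ∂μ ≤ (∫ x in s, f x ∂μ) + ∫ x in t, f x ∂μ := by
  rw [← union_sdiff_self, setIntegral_union disjoint_sdiff_right (ht.diff hs) hfs
    (hft.mono_set sdiff_subset)]
  exact add_le_add_right
    (setIntegral_mono_set hft (ae_restrict_of_forall_mem ht hf) sdiff_subset.eventuallyLE) _

section Frontier

variable {b : ℝ × ℝ} {h : ℝ} {f : ℝ × ℝ → ℝ}

theorem ContinuousOn.integrableOn_frontier_sqEl (hh : 0 < h)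
    (hf : ContinuousOn f (closure (sqEl b h))) : IntegrableOn f (frontier (sqEl b h)) μH[1] := by
  rw [closure_sqEl hh] at hf
  rw [frontier_sqEl hh]
  have h₁ : b.1 ≤ b.1 + h := by linarith
  have h₂ : b.2 ≤ b.2 + h := by linarith
  exact ((hf.integrableOn_prod_singleton_hausdorffMeasure isCompact_Icc (left_mem_Icc.2 h₂)).union
    (hf.integrableOn_prod_singleton_hausdorffMeasure isCompact_Icc (right_mem_Icc.2 h₂))).union
    ((hf.integrableOn_singleton_prod_hausdorffMeasure isCompact_Icc (left_mem_Icc.2 h₁)).union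
      (hf.integrableOn_singleton_prod_hausdorffMeasure isCompact_Icc (right_mem_Icc.2 h₁)))

theorem setIntegral_frontier_sqEl_le (hh : 0 < h) (hf : ContinuousOn f (closure (sqEl b h)))
    (hf0 : ∀ z ∈ frontier (sqEl b h), 0 ≤ f z) :
    ∫ z in frontier (sqEl b h), f z ∂μH[1]
      ≤ ((∫ x in Icc b.1 (b.1 + h), f (x, b.2)) + ∫ x in Icc b.1 (b.1 + h), f (x, b.2 + h))
        + ((∫ y in Icc b.2 (b.2 + h), f (b.1, y)) + ∫ y in Icc b.2 (b.2 + h), f (b.1 + h, y)) := by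
  rw [closure_sqEl hh] at hf
  rw [frontier_sqEl hh] at hf0 ⊢
  have h₁ : b.1 ≤ b.1 + h := by linarith
  have h₂ : b.2 ≤ b.2 + h := by linarith
  have hbot := hf.integrableOn_prod_singleton_hausdorffMeasure isCompact_Icc (left_mem_Icc.2 h₂)
  have htop := hf.integrableOn_prod_singleton_hausdorffMeasure isCompact_Icc (right_mem_Icc.2 h₂)
  have hleft := hf.integrableOn_singleton_prod_hausdorffMeasure isCompact_Icc (left_mem_Icc.2 h₁)
  have hright :=
    hf.integrableOn_singleton_prod_hausdorffMeasure isCompact_Icc (right_mem_Icc.2 h₁)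
  have hmeas_h (c : ℝ) : MeasurableSet (Icc b.1 (b.1 + h) ×ˢ {c}) :=
    measurableSet_Icc.prod (measurableSet_singleton c)
  have hmeas_v (c : ℝ) : MeasurableSet ({c} ×ˢ Icc b.2 (b.2 + h)) :=
    (measurableSet_singleton c).prod measurableSet_Icc
  refine (setIntegral_union_le_add ((hmeas_h _).union (hmeas_h _))
    ((hmeas_v _).union (hmeas_v _)) (hbot.union htop) (hleft.union hright)
    fun z hz => hf0 z (Or.inr hz)).trans (add_le_add ?_ ?_)
  · simpa only [setIntegral_prod_singleton_hausdorffMeasure] using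
      setIntegral_union_le_add (hmeas_h _) (hmeas_h _) hbot htop
        fun z hz => hf0 z (Or.inl (Or.inr hz))
  · simpa only [setIntegral_singleton_prod_hausdorffMeasure] using
      setIntegral_union_le_add (hmeas_v _) (hmeas_v _) hleft hright
        fun z hz => hf0 z (Or.inr (Or.inr hz))

end Frontier

theorem setIntegral_frontier_fst_mul_sq_le {b : ℝ × ℝ} {h : ℝ} {u : ℝ × ℝ → ℝ}
    {U : Set (ℝ × ℝ)} (hb : 0 < b.1) (hh : 0 < h) (hU : IsOpen U)
    (hKU : closure (sqEl b h) ⊆ U) (hu : ContDiffOn ℝ 1 u U)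
    (hmean : ∫ z in sqEl b h, z.1 * u z = 0) :
    ∫ z in frontier (sqEl b h), z.1 * u z ^ 2 ∂μH[1]
      ≤ 24 * ((b.1 + h) / b.1) ^ 2 * h * ∫ z in sqEl b h, z.1 * gradSq u z := by
  rw [← volume_restrict_closure_sqEl] at hmean ⊢
  have huK := hu.continuousOn.mono hKU
  have hnonneg : ∀ z ∈ frontier (sqEl b h), 0 ≤ z.1 * u z ^ 2 := fun z hz => by
    have hz' := frontier_subset_closure hz
    rw [closure_sqEl hh] at hz'
    exact mul_nonneg (hb.le.trans hz'.1.1) (sq_nonneg _)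
  have hbot := setIntegral_mul_sq_horizontal_le hb hh hU hKU hu hmean
    (left_mem_Icc.2 (by linarith : b.2 ≤ b.2 + h))
  have htop := setIntegral_mul_sq_horizontal_le hb hh hU hKU hu hmean
    (right_mem_Icc.2 (by linarith : b.2 ≤ b.2 + h))
  have hleft := setIntegral_mul_sq_vertical_le hb hh hU hKU hu hmean
    (left_mem_Icc.2 (by linarith : b.1 ≤ b.1 + h))
  have hright := setIntegral_mul_sq_vertical_le hb hh hU hKU hu hmean
    (right_mem_Icc.2 (by linarith : b.1 ≤ b.1 + h))
  have := setIntegral_frontier_sqEl_le hh (by fun_prop) hnonneg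
  linarith

/-- Upper bound of the stabilization norm-equivalence: for vector fields that are
`r`-weighted mean-zero on the square element, the boundary stabilization is bounded
by the weighted energy seminorm, with constant independent of the element size. -/
theorem stabilization_upper_bound :
    ∃ C : ℝ, 0 < C ∧ ∀ (h : ℝ), 0 < h → ∀ b : ℝ × ℝ, 0 < b.1 →
      ∀ v : ℝ × ℝ → ℝ × ℝ,
        (∃ U : Set (ℝ × ℝ), IsOpen U ∧ closure (sqEl b h) ⊆ U ∧ ContDiffOn ℝ 1 v U) →
        (∫ x in sqEl b h, x.1 • v x ∂volume) = 0 →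
        h⁻¹ * (∫ x in frontier (sqEl b h),
            2 * π * x.1 * ((v x).1 ^ 2 + (v x).2 ^ 2) ∂(μH[1]))
          ≤ C * ((b.1 + h) / b.1) ^ 2 *
            (∫ x in sqEl b h,
              x.1 * (gradSq (fun y => (v y).1) x + gradSq (fun y => (v y).2) x) ∂volume) := by
  refine ⟨48 * π, by positivity, fun h hh b hb v ⟨U, hU, hKU, hv⟩ hmean => ?_⟩
  have hK := isCompact_closure_sqEl (b := b) hh
  have hvK := hv.continuousOn.mono hKU
  have hsmul : IntegrableOn (fun x => x.1 • v x) (sqEl b h) :=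
    ((continuous_fst.continuousOn.smul hvK).integrableOn_compact hK).mono_set subset_closure
  have hS₁ := setIntegral_frontier_fst_mul_sq_le hb hh hU hKU hv.fst
    (by simpa using (fst_integral hsmul).symm.trans (congrArg Prod.fst hmean))
  have hS₂ := setIntegral_frontier_fst_mul_sq_le hb hh hU hKU hv.snd
    (by simpa using (snd_integral hsmul).symm.trans (congrArg Prod.snd hmean))
  have hJ {u : ℝ × ℝ → ℝ} (hu : ContDiffOn ℝ 1 u U) :
      IntegrableOn (fun x => x.1 * gradSq u x) (sqEl b h) :=
    ((continuous_fst.continuousOn.mul ((hu.continuousOn_gradSq hU).mono hKU)).integrableOn_compact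
      hK).mono_set subset_closure
  calc h⁻¹ * (∫ x in frontier (sqEl b h), 2 * π * x.1 * ((v x).1 ^ 2 + (v x).2 ^ 2) ∂μH[1])
      = h⁻¹ * (2 * π * ((∫ x in frontier (sqEl b h), x.1 * (v x).1 ^ 2 ∂μH[1])
          + ∫ x in frontier (sqEl b h), x.1 * (v x).2 ^ 2 ∂μH[1])) := by
        rw [← integral_add (ContinuousOn.integrableOn_frontier_sqEl hh (by fun_prop))
          (ContinuousOn.integrableOn_frontier_sqEl hh (by fun_prop)), ← integral_const_mul (2 * π)]
        congr 1
        exact integral_congr_ae (.of_forall fun x => by ring)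
    _ ≤ h⁻¹ * (2 * π * (24 * ((b.1 + h) / b.1) ^ 2 * h
          * ((∫ x in sqEl b h, x.1 * gradSq (fun y => (v y).1) x)
            + ∫ x in sqEl b h, x.1 * gradSq (fun y => (v y).2) x))) := by
        gcongr
        linarith
    _ = _ := by
        rw [← integral_add (hJ hv.fst) (hJ hv.snd)]
        field_simp
        ring_nf
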